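/- arXiv:2311.10031 — 5 statements merged into one kernel-verified Lean document; each statement's English description precedes it below -/
import Mathlib

section
/- Let ψ be convex on [0,1] with 0 ≤ 2c−b < 2c−a ≤ c ≤ a < b ≤ 1. If ψ is not affine on the interval (2c−a, a), then (ψ(b)+ψ(2c−b))/2 > (ψ(a)+ψ(2c−a))/2 (strict inequality). -/
/-!
Subtract from `ψ` its chord over `[2c - b, b]`. The resulting convex function `h` vanishes at both
endpoints, hence is nonpositive in between, and since `a + (2c - a) = b + (2c - b)` the claim reads
`h a + h (2c - a) < 0`. Otherwise `h` vanishes at `2c - b < 2c - a`, so by the three-slope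
inequality it is nonnegative, hence zero, on `[2c - a, b]`, and `ψ` is affine on `(2c - a, a)`.
-/

open Set

namespace ConvexOn

variable {s : Set ℝ} {f : ℝ → ℝ}

theorem sub_affine (hf : ConvexOn ℝ s f) (p q : ℝ) :
    ConvexOn ℝ s (fun t => f t - (p * t + q)) :=
  hf.sub (((LinearMap.mul ℝ ℝ p).concaveOn hf.1).add_const q)

theorem eqOn_zero_Icc_of_eq_zero (hf : ConvexOn ℝ s f) {x y z : ℝ} (hx : x ∈ s) (hz : z ∈ s)
    (hxy : x < y) (hfx : f x = 0) (hfy : f y = 0) (hfz : f z = 0) : EqOn f 0 (Icc y z) := by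
  intro t ht
  have hxt : t ∈ Icc x z := ⟨hxy.le.trans ht.1, ht.2⟩
  have hle : f t ≤ 0 := by simpa [hfx, hfz] using hf.le_max_of_mem_Icc hx hz hxt
  have hge : 0 ≤ f t :=
    hfy ▸ hf.le_right_of_left_le'' hx (hf.1.ordConnected.out hx hz hxt) hxy ht.1 (by rw [hfx, hfy])
  exact le_antisymm hle hge

end ConvexOn

theorem convex_reflection_bound_strict_general (ψ : ℝ → ℝ)
    (hconv : ConvexOn ℝ (Set.Icc (0:ℝ) 1) ψ)
    (a b c : ℝ) (h0 : 0 ≤ 2*c - b)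
    (h3 : c ≤ a) (h4 : a < b) (h5 : b ≤ 1)
    (hnotaff : ¬ ∃ p q : ℝ, ∀ t ∈ Set.Ioo (2*c - a) a, ψ t = p * t + q) :
    (ψ a + ψ (2*c - a)) / 2 < (ψ b + ψ (2*c - b)) / 2 := by
  set p := (ψ b - ψ (2*c - b)) / (b - (2*c - b))
  set q := ψ (2*c - b) - p * (2*c - b)
  set h := fun t => ψ t - (p * t + q) with h_def
  have hh : ConvexOn ℝ (Icc 0 1) h := hconv.sub_affine p q
  have hmem_left : 2*c - b ∈ Icc (0:ℝ) 1 := ⟨h0, by linarith⟩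
  have hmem_right : b ∈ Icc (0:ℝ) 1 := ⟨by linarith, h5⟩
  have hh_left : h (2*c - b) = 0 := by simp only [h_def, q]; ring
  have hh_right : h b = 0 := by
    simp only [h_def, q, p]
    field_simp [show b - (2*c - b) ≠ 0 by linarith]
    ring
  have hh_nonpos : ∀ t ∈ Icc (2*c - b) b, h t ≤ 0 := fun t ht => by
    simpa [hh_left, hh_right] using hh.le_max_of_mem_Icc hmem_left hmem_right ht
  have ha := hh_nonpos a ⟨by linarith, h4.le⟩
  have ha' := hh_nonpos (2*c - a) ⟨by linarith, by linarith⟩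
  by_contra hle
  have hsum : h a + h (2*c - a) - (h b + h (2*c - b)) =
      (ψ a + ψ (2*c - a)) - (ψ b + ψ (2*c - b)) := by
    simp only [h_def]; ring
  have ha'_zero : h (2*c - a) = 0 := by linarith
  refine hnotaff ⟨p, q, fun t ht => ?_⟩
  have := hh.eqOn_zero_Icc_of_eq_zero hmem_left hmem_right (by linarith) hh_left ha'_zero hh_right
    ⟨ht.1.le, ht.2.le.trans h4.le⟩
  simp only [h_def, Pi.zero_apply] at this
  linarith

/-- Lemma 4.6, strictness: strict inequality unless ψ is affine on (2c−a, a). -/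
theorem convex_reflection_bound_strict (ψ : ℝ → ℝ)
    (hconv : ConvexOn ℝ (Set.Icc (0:ℝ) 1) ψ)
    (a b c : ℝ) (h0 : 0 ≤ 2*c - b) (h1 : 2*c - b < 2*c - a)
    (h2 : 2*c - a ≤ c) (h3 : c ≤ a) (h4 : a < b) (h5 : b ≤ 1)
    (hnotaff : ¬ ∃ p q : ℝ, ∀ t ∈ Set.Ioo (2*c - a) a, ψ t = p * t + q) :
    (ψ a + ψ (2*c - a)) / 2 < (ψ b + ψ (2*c - b)) / 2 :=
  convex_reflection_bound_strict_general ψ hconv a b c h0 h3 h4 h5 hnotaff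
end

section
/- Let N ≥ 1 be an integer and ψ a continuous, strictly monotone increasing convex function on [0,1], with ψ̄ = (N+1)^{-1} ∑_{j=0}^{N} ψ(j/N). Then the number n of indices j ∈ {0,1,...,N} with ψ(j/N) ≤ ψ̄ satisfies n ≥ (N+1)/2. -/
/-!
The grid points `j / N`, `0 ≤ j ≤ N`, have mean `1 / 2`, so by Jensen's inequality the average
`ψ̄` of the values `ψ (j / N)` is at least `ψ (1 / 2)`. Since `ψ` is monotone, every `j ≤ N / 2`
then has `ψ (j / N) ≤ ψ (1 / 2) ≤ ψ̄`, and there are `⌊N / 2⌋ + 1 ≥ (N + 1) / 2` such `j`.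
-/

open Finset

lemma ConvexOn.map_sum_div_card_le {ι : Type*} {s : Set ℝ} {f : ℝ → ℝ} (hf : ConvexOn ℝ s f)
    {t : Finset ι} (ht : t.Nonempty) {p : ι → ℝ} (hp : ∀ i ∈ t, p i ∈ s) :
    f ((∑ i ∈ t, p i) / #t) ≤ (∑ i ∈ t, f (p i)) / #t := by
  have hcard : (0 : ℝ) < #t := by exact_mod_cast ht.card_pos
  have hcenter (q : ι → ℝ) : t.centerMass (fun _ => (1 : ℝ)) q = (∑ i ∈ t, q i) / #t := by
    simp [centerMass, div_eq_inv_mul]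
  simpa only [hcenter, Function.comp_apply] using
    hf.map_centerMass_le (fun _ _ => zero_le_one) (by simpa using hcard) hp

lemma natCast_div_mem_Icc {N k : ℕ} (hk : k ≤ N) : (k : ℝ) / N ∈ Set.Icc (0 : ℝ) 1 :=
  ⟨by positivity, div_le_one_of_le₀ (by exact_mod_cast hk) (Nat.cast_nonneg N)⟩

lemma sum_range_succ_natCast_div_self {N : ℕ} (hN : N ≠ 0) :
    ∑ k ∈ range (N + 1), (k : ℝ) / N = (N + 1) / 2 := by
  have hgauss : (∑ k ∈ range (N + 1), (k : ℝ)) * 2 = (N + 1) * N := by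
    rw [← Nat.cast_sum, ← Nat.cast_two, ← Nat.cast_mul, sum_range_id_mul_two, Nat.add_sub_cancel]
    push_cast
    ring
  have hN' : (N : ℝ) ≠ 0 := by exact_mod_cast hN
  rw [← sum_div]
  field_simp
  linarith

lemma ConvexOn.map_half_le_average_range {f : ℝ → ℝ} (hf : ConvexOn ℝ (Set.Icc 0 1) f)
    {N : ℕ} (hN : N ≠ 0) :
    f (1 / 2) ≤ (∑ k ∈ range (N + 1), f ((k : ℝ) / N)) / (N + 1) := by
  have hjensen := hf.map_sum_div_card_le (nonempty_range_add_one (n := N))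
    (fun k hk => natCast_div_mem_Icc (Nat.lt_succ_iff.mp (mem_range.mp hk)))
  have hmean : (∑ k ∈ range (N + 1), (k : ℝ) / N) / #(range (N + 1)) = 1 / 2 := by
    rw [sum_range_succ_natCast_div_self hN, card_range]
    push_cast
    field_simp
  rwa [hmean, card_range, Nat.cast_succ] at hjensen

lemma range_half_subset_filter_le {f : ℝ → ℝ} (hf : MonotoneOn f (Set.Icc 0 1)) (N : ℕ)
    {A : ℝ} (hA : f (1 / 2) ≤ A) :
    range (N / 2 + 1) ⊆ (range (N + 1)).filter (fun j : ℕ => f ((j : ℝ) / N) ≤ A) := by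
  intro j hj
  have hjN : j ≤ N := by rw [mem_range] at hj; omega
  have hhalf : (j : ℝ) / N ≤ 1 / 2 := by
    have h2j : ((2 * j : ℕ) : ℝ) ≤ N := by rw [mem_range] at hj; exact_mod_cast (by omega)
    push_cast at h2j
    exact div_le_of_le_mul₀ (Nat.cast_nonneg N) (by norm_num) (by linarith)
  rw [mem_filter, mem_range]
  exact ⟨Nat.lt_succ_of_le hjN,
    (hf (natCast_div_mem_Icc hjN) (by norm_num) hhalf).trans hA⟩

theorem count_below_average_general (N : ℕ) (hN : 1 ≤ N) (ψ : ℝ → ℝ)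
    (hmono : StrictMonoOn ψ (Set.Icc (0:ℝ) 1))
    (hconv : ConvexOn ℝ (Set.Icc (0:ℝ) 1) ψ) :
    ((N : ℝ) + 1) / 2 ≤
      ((Finset.range (N+1)).filter
        (fun j : ℕ => ψ ((j : ℝ) / N) ≤ (∑ k ∈ Finset.range (N+1), ψ (k / N)) / (N+1))).card := by
  have hsubset := range_half_subset_filter_le hmono.monotoneOn N
    (hconv.map_half_le_average_range (Nat.one_le_iff_ne_zero.mp hN))
  calc ((N : ℝ) + 1) / 2 ≤ ((N / 2 + 1 : ℕ) : ℝ) := by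
        rw [div_le_iff₀ two_pos]; exact_mod_cast (by omega : N + 1 ≤ (N / 2 + 1) * 2)
    _ = #(range (N / 2 + 1)) := by rw [card_range]
    _ ≤ _ := by exact_mod_cast card_le_card hsubset

/-- Part of Proposition 4.7: at least half of the values ψ(j/N) lie below the average. -/
theorem count_below_average (N : ℕ) (hN : 1 ≤ N) (ψ : ℝ → ℝ)
    (hcont : ContinuousOn ψ (Set.Icc (0:ℝ) 1))
    (hmono : StrictMonoOn ψ (Set.Icc (0:ℝ) 1))
    (hconv : ConvexOn ℝ (Set.Icc (0:ℝ) 1) ψ) :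
    ((N : ℝ) + 1) / 2 ≤
      ((Finset.range (N+1)).filter
        (fun j : ℕ => ψ ((j : ℝ) / N) ≤ (∑ k ∈ Finset.range (N+1), ψ (k / N)) / (N+1))).card :=
  count_below_average_general N hN ψ hmono hconv
end

section
/- For every integer m ≥ 1 and every half-odd-integer S (i.e., S = k + 1/2 for integer k ≥ 0), the sum ∑_{j} (3j² − S(S+1))^{2m+1} over j ∈ {−S, −S+1, ..., S−1, S} (so j is a half-odd-integer ranging over 2S+1 values) is nonnegative. -/
/-!
For `S = k + 1/2` the summand is even in `j`, so it suffices to look at the `k + 1` values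
`t_i` at `j = i + 1/2`; these increase with `i` and sum to zero. Let `a` be the positive parts of
the `t_i` and `b` the absolute values of their negative parts, both sorted decreasingly. Pairing the
`i`-th largest with the `i`-th smallest term shows that the partial sums of `a` dominate those of
`b`, i.e. `a` weakly majorizes `b`. Hence `∑ bᵢ^q ≤ ∑ aᵢ^q` for every `q`, and for odd `q` the
difference is `∑ tᵢ^q`.
-/

open Finset

section Majorization

variable {R : Type*} [CommRing R] [LinearOrder R] [IsStrictOrderedRing R]

theorem sum_mul_nonneg_of_antitone {d c : ℕ → R} (n : ℕ) (hc : Antitone c) (hc0 : ∀ i, 0 ≤ c i)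
    (hd : ∀ s ≤ n, 0 ≤ ∑ i ∈ range s, d i) : 0 ≤ ∑ i ∈ range n, d i * c i := by
  have hparts := sum_range_by_parts c d n
  simp only [smul_eq_mul] at hparts
  simp_rw [mul_comm (d _), hparts, sub_nonneg]
  calc ∑ i ∈ range (n - 1), (c (i + 1) - c i) * ∑ j ∈ range (i + 1), d j
      ≤ 0 := sum_nonpos fun i hi ↦ mul_nonpos_of_nonpos_of_nonneg
          (sub_nonpos.2 (hc i.le_succ)) (hd _ (by grind))
    _ ≤ c (n - 1) * ∑ i ∈ range n, d i := mul_nonneg (hc0 _) (hd n le_rfl)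

/-- `aᵢ^q - bᵢ^q = (aᵢ - bᵢ) cᵢ` with `cᵢ = ∑ₗ aᵢ^l bᵢ^(q-1-l)` antitone, so summation by parts
applies. -/
theorem sum_pow_le_sum_pow_of_sum_le_sum {a b : ℕ → R} (n q : ℕ) (ha : Antitone a)
    (hb : Antitone b) (ha0 : ∀ i, 0 ≤ a i) (hb0 : ∀ i, 0 ≤ b i)
    (hab : ∀ s ≤ n, ∑ i ∈ range s, b i ≤ ∑ i ∈ range s, a i) :
    ∑ i ∈ range n, b i ^ q ≤ ∑ i ∈ range n, a i ^ q := by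
  set c : ℕ → R := fun i ↦ ∑ l ∈ range q, a i ^ l * b i ^ (q - 1 - l)
  have hc : Antitone c := fun i j hij ↦ sum_le_sum fun l _ ↦
    mul_le_mul (pow_le_pow_left₀ (ha0 j) (ha hij) l) (pow_le_pow_left₀ (hb0 j) (hb hij) _)
      (pow_nonneg (hb0 j) _) (pow_nonneg (ha0 i) _)
  have hc0 : ∀ i, 0 ≤ c i := fun i ↦
    sum_nonneg fun l _ ↦ mul_nonneg (pow_nonneg (ha0 i) _) (pow_nonneg (hb0 i) _)
  have key := sum_mul_nonneg_of_antitone (d := fun i ↦ a i - b i) n hc hc0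
    fun s hs ↦ by simpa only [sum_sub_distrib, sub_nonneg] using hab s hs
  simp_rw [c, mul_comm (a _ - b _), geom_sum₂_mul, sum_sub_distrib, sub_nonneg] at key
  exact key

end Majorization

theorem Odd.pow_posPart_sub_pow_negPart {R : Type*} [CommRing R] [LinearOrder R]
    [IsStrictOrderedRing R] {q : ℕ} (hq : Odd q) (x : R) : x⁺ ^ q - x⁻ ^ q = x ^ q := by
  rcases le_total x 0 with hx | hx
  · rw [posPart_eq_zero.2 hx, negPart_eq_neg.2 hx, hq.neg_pow, zero_pow hq.pos.ne']
    ring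
  · rw [posPart_eq_self.2 hx, negPart_eq_zero.2 hx, zero_pow hq.pos.ne', sub_zero]

-- The summand at `j = i + 1/2` for spin `S = k + 1/2`.
noncomputable def spinTerm (k i : ℕ) : ℝ :=
  3 * ((i : ℝ) + 1/2) ^ 2 - ((k : ℝ) + 1/2) * ((k : ℝ) + 3/2)

theorem spinTerm_mono (k : ℕ) : Monotone (spinTerm k) := fun i j hij ↦ by
  have : (i : ℝ) ≤ j := by exact_mod_cast hij
  unfold spinTerm
  nlinarith [i.cast_nonneg (α := ℝ)]

theorem spinTerm_nonpos {k i : ℕ} (h : 2 * i + 1 ≤ k) : spinTerm k i ≤ 0 := by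
  have : 2 * (i : ℝ) + 1 ≤ k := by exact_mod_cast h
  unfold spinTerm
  nlinarith [i.cast_nonneg (α := ℝ)]

theorem sum_spinTerm (k : ℕ) : ∑ i ∈ range (k + 1), spinTerm k i = 0 := by
  have hsq : ∀ n : ℕ, ∑ i ∈ range n, ((i : ℝ) + 1/2) ^ 2 = (n : ℝ) ^ 3 / 3 - (n : ℝ) / 12 := by
    intro n
    induction n with
    | zero => simp
    | succ n ih => rw [sum_range_succ, ih]; push_cast; ring
  simp only [spinTerm, sum_sub_distrib, sum_const, card_range, ← mul_sum, hsq, nsmul_eq_mul]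
  push_cast
  ring

theorem spinTerm_sub_add_spinTerm {k i : ℕ} (hi : i ≤ k) :
    spinTerm k (k - i) + spinTerm k i = 6 * (i : ℝ) ^ 2 - 6 * k * i + k ^ 2 - k := by
  rw [spinTerm, spinTerm, Nat.cast_sub hi]
  ring

theorem sum_spinTerm_sub_add_spinTerm {k s : ℕ} (hs : s ≤ k + 1) :
    ∑ i ∈ range s, (spinTerm k (k - i) + spinTerm k i) = s * (k + 1 - 2 * s) * (k + 1 - s) := by
  induction s with
  | zero => simp
  | succ s ih =>
    rw [sum_range_succ, ih (by omega), spinTerm_sub_add_spinTerm (by omega)]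
    push_cast
    ring

noncomputable def spinTermPos (k i : ℕ) : ℝ := (spinTerm k (k - i))⁺

noncomputable def spinTermNeg (k i : ℕ) : ℝ := (spinTerm k i)⁻

theorem sum_pow_spinTermPos_sub_sum_pow_spinTermNeg (k : ℕ) {q : ℕ} (hq : Odd q) :
    ∑ i ∈ range (k + 1), spinTermPos k i ^ q - ∑ i ∈ range (k + 1), spinTermNeg k i ^ q =
      ∑ i ∈ range (k + 1), spinTerm k i ^ q := by
  have hreflect : ∑ i ∈ range (k + 1), spinTermPos k i ^ q =
      ∑ i ∈ range (k + 1), (spinTerm k i)⁺ ^ q := by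
    rw [← sum_range_reflect]
    refine sum_congr rfl fun i hi ↦ ?_
    rw [spinTermPos, add_tsub_cancel_right, Nat.sub_sub_self (by grind)]
  rw [hreflect, ← sum_sub_distrib]
  exact sum_congr rfl fun i _ ↦ hq.pow_posPart_sub_pow_negPart _

theorem sum_spinTermNeg_le_sum_spinTermPos {k s : ℕ} (hs : s ≤ k + 1) :
    ∑ i ∈ range s, spinTermNeg k i ≤ ∑ i ∈ range s, spinTermPos k i := by
  rw [← sub_nonneg, ← sum_sub_distrib]
  by_cases hhalf : 2 * s ≤ k + 1
  · -- all `tᵢ` with `i < s` are nonpositive, and `t_{k-i} + tᵢ` sums to a nonnegative cubic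
    have hpair : ∀ i ∈ range s, spinTerm k (k - i) + spinTerm k i ≤
        spinTermPos k i - spinTermNeg k i := fun i hi ↦ by
      have hneg : spinTermNeg k i = -spinTerm k i :=
        negPart_eq_neg.2 (spinTerm_nonpos (by grind))
      rw [hneg, sub_neg_eq_add]
      exact add_le_add_left (le_posPart _) _
    refine le_trans ?_ (sum_le_sum hpair)
    rw [sum_spinTerm_sub_add_spinTerm hs]
    have : 2 * (s : ℝ) ≤ k + 1 := by exact_mod_cast hhalf
    apply mul_nonneg (mul_nonneg s.cast_nonneg _) <;> linarith
  · -- the positive parts beyond `s` vanish, and the full sums agree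
    have htotal : ∑ i ∈ range (k + 1), (spinTermPos k i - spinTermNeg k i) = 0 := by
      simpa only [sum_sub_distrib, pow_one, sum_spinTerm] using
        sum_pow_spinTermPos_sub_sum_pow_spinTermNeg k odd_one
    have htail : ∑ i ∈ Ico s (k + 1), (spinTermPos k i - spinTermNeg k i) ≤ 0 :=
      sum_nonpos fun i hi ↦ by
        have hpos : spinTermPos k i = 0 := posPart_eq_zero.2 (spinTerm_nonpos (by grind))
        rw [hpos, zero_sub, neg_nonpos]
        exact negPart_nonneg _
    have := sum_Ico_eq_sub (fun i ↦ spinTermPos k i - spinTermNeg k i) hs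
    linarith

theorem sum_pow_spinTerm_nonneg (k : ℕ) {q : ℕ} (hq : Odd q) :
    0 ≤ ∑ i ∈ range (k + 1), spinTerm k i ^ q := by
  rw [← sum_pow_spinTermPos_sub_sum_pow_spinTermNeg k hq, sub_nonneg]
  exact sum_pow_le_sum_pow_of_sum_le_sum _ _
    (posPart_mono.comp_antitone
      ((spinTerm_mono k).comp_antitone fun _ _ h ↦ Nat.sub_le_sub_left h k))
    (negPart_anti.comp_monotone (spinTerm_mono k)) (fun _ ↦ posPart_nonneg _)
    (fun _ ↦ negPart_nonneg _) fun _ ↦ sum_spinTermNeg_le_sum_spinTermPos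

theorem sum_range_spin_eq_two_mul_sum_spinTerm (k q : ℕ) :
    ∑ i ∈ range (2 * k + 2), (3 * (-(k + 1/2 : ℝ) + i) ^ 2 - (k + 1/2) * ((k + 1/2) + 1)) ^ q =
      2 * ∑ i ∈ range (k + 1), spinTerm k i ^ q := by
  set f : ℕ → ℝ := fun i ↦ (3 * (-(k + 1/2 : ℝ) + i) ^ 2 - (k + 1/2) * ((k + 1/2) + 1)) ^ q
  have hlower : ∀ i ∈ range (k + 1), f (k + 1 - 1 - i) = spinTerm k i ^ q := fun i hi ↦ by
    simp only [f, add_tsub_cancel_right, spinTerm]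
    rw [Nat.cast_sub (by grind)]
    ring_nf
  have hupper : ∀ i ∈ range (k + 1), f (k + 1 + i) = spinTerm k i ^ q := fun i _ ↦ by
    simp only [f, spinTerm]
    push_cast
    ring_nf
  rw [show 2 * k + 2 = (k + 1) + (k + 1) by ring, sum_range_add, ← sum_range_reflect f,
    sum_congr rfl hlower, sum_congr rfl hupper, two_mul]

theorem spin_sum_nonneg_half_odd_general (m k : ℕ) :
    0 ≤ ∑ i ∈ Finset.range (2*k + 2),
        (3 * (-(k + 1/2 : ℝ) + i)^2 - (k + 1/2) * ((k + 1/2) + 1))^(2*m + 1) := by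
  rw [sum_range_spin_eq_two_mul_sum_spinTerm]
  exact mul_nonneg zero_le_two (sum_pow_spinTerm_nonneg k (odd_two_mul_add_one m))

/-- Corollary 4.5: the inequality (3.6) for half-odd-integer spin S = k + 1/2. -/
theorem spin_sum_nonneg_half_odd (m k : ℕ) (hm : 1 ≤ m) :
    0 ≤ ∑ i ∈ Finset.range (2*k + 2),
        (3 * (-(k + 1/2 : ℝ) + i)^2 - (k + 1/2) * ((k + 1/2) + 1))^(2*m + 1) :=
  spin_sum_nonneg_half_odd_general m k
end

section
/- For every integer m ≥ 1 and every integer S ≥ 2, the sum ∑_{j=−S}^{S} (3j² − S(S+1))^{2m+1} is nonnegative. -/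
/-!
Write `x_j = 3 j² - S(S+1)`; then `∑ x_j = 0`. Match the negative terms, ordered by absolute
value, with the positive terms (padded with zeros) in the same order, and group the pairs of
`j` and `-j` into blocks `r = 0, …, S`. The tangent line bound
`y^(k+1) - a^(k+1) ≥ (k+1) a^k (y - a)` at `a = x_r⁻` bounds block `r` of the `(2m+1)`-st powers
below by `(2m+1) (x_r⁻)^(2m) d_r`, where `d_r` is block `r` of the first powers. The weights
`(x_r⁻)^(2m)` decrease with `r`, while `d_r` changes sign at most once, from `+` to `-`, and
`∑ d_r = ∑ x_j = 0`; so `∑ (x_r⁻)^(2m) d_r ≥ 0`.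
-/

open Finset

section OrderedRing

variable {R : Type*} [CommRing R] [LinearOrder R] [IsStrictOrderedRing R]

theorem mul_pow_mul_sub_le_pow_sub_pow {x y : R} (hx : 0 ≤ x) (hy : 0 ≤ y) (n : ℕ) :
    (n + 1) * x ^ n * (y - x) ≤ y ^ (n + 1) - x ^ (n + 1) := by
  induction n with
  | zero => simp
  | succ n ih =>
    have step : y ^ (n + 2) - x ^ (n + 2) - (n + 2) * x ^ (n + 1) * (y - x) =
        y * (y ^ (n + 1) - x ^ (n + 1) - (n + 1) * x ^ n * (y - x)) +
          (n + 1) * x ^ n * (y - x) ^ 2 := by ring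
    have h₁ : 0 ≤ y * (y ^ (n + 1) - x ^ (n + 1) - (n + 1) * x ^ n * (y - x)) :=
      mul_nonneg hy (sub_nonneg.2 ih)
    have h₂ : 0 ≤ (n + 1) * x ^ n * (y - x) ^ 2 := by positivity
    push_cast
    linarith

theorem Odd.pow_eq_posPart_pow_sub_negPart_pow {k : ℕ} (hk : Odd k) (x : R) :
    x ^ k = x⁺ ^ k - x⁻ ^ k := by
  rcases le_total 0 x with hx | hx
  · rw [posPart_eq_self.2 hx, negPart_eq_zero.2 hx, zero_pow hk.pos.ne', sub_zero]
  · rw [posPart_eq_zero.2 hx, negPart_eq_neg.2 hx, zero_pow hk.pos.ne', zero_sub, hk.neg_pow,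
      neg_neg]

theorem sum_range_mul_nonneg_of_antitone_of_sign_change {c e : ℕ → R} {n : ℕ}
    (hc : Antitone c) (hc₀ : ∀ r, 0 ≤ c r)
    (he : ∀ r r', r < r' → r' < n → e r < 0 → e r' ≤ 0)
    (hsum : 0 ≤ ∑ r ∈ range n, e r) :
    0 ≤ ∑ r ∈ range n, c r * e r := by
  classical
  by_cases hneg : ∃ r, r < n ∧ e r < 0
  · -- at the first negative `e r₀`, `(c r - c r₀) * e r ≥ 0` for every `r`
    obtain ⟨hr₀n, hr₀⟩ := Nat.find_spec hneg
    have key : ∀ r ∈ range n, c (Nat.find hneg) * e r ≤ c r * e r := by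
      intro r hr
      rw [mem_range] at hr
      rcases lt_or_ge r (Nat.find hneg) with h | h
      · have : 0 ≤ e r := not_lt.1 fun h' => Nat.find_min hneg h ⟨hr, h'⟩
        exact mul_le_mul_of_nonneg_right (hc h.le) this
      · have : e r ≤ 0 := h.eq_or_lt.elim (fun h => h ▸ hr₀.le) (fun h => he _ _ h hr hr₀)
        exact mul_le_mul_of_nonpos_right (hc h) this
    calc 0 ≤ c (Nat.find hneg) * ∑ r ∈ range n, e r := mul_nonneg (hc₀ _) hsum
      _ = ∑ r ∈ range n, c (Nat.find hneg) * e r := mul_sum ..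
      _ ≤ ∑ r ∈ range n, c r * e r := sum_le_sum key
  · push Not at hneg
    exact sum_nonneg fun r hr => mul_nonneg (hc₀ r) (hneg r (mem_range.1 hr))

end OrderedRing

theorem Int.exists_mul_sq_le_lt {a N : ℤ} (ha : 0 < a) (hN : 0 ≤ N) :
    ∃ t : ℤ, 0 ≤ t ∧ a * t ^ 2 ≤ N ∧ N < a * (t + 1) ^ 2 := by
  lift a to ℕ using ha.le
  lift N to ℕ using hN
  have ha' : 0 < a := by exact_mod_cast ha
  have hle : a * Nat.sqrt (N / a) ^ 2 ≤ N :=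
    (Nat.mul_le_mul_left a (Nat.sqrt_le' _)).trans (Nat.mul_div_le N a)
  have hlt : N < a * (Nat.sqrt (N / a) + 1) ^ 2 :=
    (Nat.lt_mul_div_succ N ha').trans_le (Nat.mul_le_mul_left a (Nat.lt_succ_sqrt' _))
  exact ⟨Nat.sqrt (N / a), by positivity, by exact_mod_cast hle, by exact_mod_cast hlt⟩

theorem sum_Icc_neg_natCast_eq_sum_range {M : Type*} [AddCommMonoid M] (f : ℤ → M)
    (n : ℕ) :
    ∑ j ∈ Icc (-(n : ℤ)) n, f j = ∑ r ∈ range (n + 1), ∑ j ∈ {(r : ℤ), -(r : ℤ)}, f j := by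
  rw [← sum_fiberwise_of_maps_to (g := Int.natAbs) (t := range (n + 1))
    (fun j hj => by rw [mem_Icc] at hj; rw [mem_range]; omega)]
  refine sum_congr rfl fun r hr => ?_
  rw [mem_range] at hr
  congr 1
  ext j
  simp only [mem_filter, mem_Icc, mem_insert, mem_singleton]
  omega

namespace SpinSum

def term (S j : ℤ) : ℤ := 3 * j ^ 2 - S * (S + 1)

/-- Since `term S` is even, this involution of `[-S, S]` matches the two copies of `x_r` with
`x_(S-r)` and `x_(S+1-r)` (and `x_0` with `x_S`): the negative terms, ordered by absolute value,
meet the positive terms in the same order. -/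
def partner (S j : ℤ) : ℤ := if 0 ≤ j then S - j else -(S + 1) - j

def block (S : ℤ) (k r : ℕ) : ℤ :=
  ∑ j ∈ {(r : ℤ), -(r : ℤ)}, ((term S (partner S j))⁺ ^ k - (term S j)⁻ ^ k)

theorem term_neg (S j : ℤ) : term S (-j) = term S j := by
  simp only [term, even_two, Even.neg_pow]

theorem sum_comp_partner {M : Type*} [AddCommMonoid M] (S : ℤ) (f : ℤ → M) :
    ∑ j ∈ Icc (-S) S, f (partner S j) = ∑ j ∈ Icc (-S) S, f j := by
  have maps : ∀ j ∈ Icc (-S) S, partner S j ∈ Icc (-S) S := by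
    intro j hj
    simp only [mem_Icc, partner] at hj ⊢
    split_ifs <;> omega
  have involutive : ∀ j ∈ Icc (-S) S, partner S (partner S j) = j := by
    intro j hj
    simp only [mem_Icc, partner] at hj ⊢
    split_ifs <;> omega
  exact sum_nbij' (partner S) (partner S) maps maps involutive involutive fun _ _ => rfl

theorem sum_term_pow_eq_sum_block {k : ℕ} (hk : Odd k) (n : ℕ) :
    ∑ j ∈ Icc (-(n : ℤ)) n, term n j ^ k = ∑ r ∈ range (n + 1), block n k r :=
  calc ∑ j ∈ Icc (-(n : ℤ)) n, term n j ^ k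
      = ∑ j ∈ Icc (-(n : ℤ)) n, ((term n j)⁺ ^ k - (term n j)⁻ ^ k) :=
        sum_congr rfl fun j _ => hk.pow_eq_posPart_pow_sub_negPart_pow _
    _ = ∑ j ∈ Icc (-(n : ℤ)) n, ((term n (partner n j))⁺ ^ k - (term n j)⁻ ^ k) := by
        rw [sum_sub_distrib, sum_sub_distrib, sum_comp_partner (n : ℤ) fun j => (term n j)⁺ ^ k]
    _ = ∑ r ∈ range (n + 1), block n k r := sum_Icc_neg_natCast_eq_sum_range _ n

theorem three_mul_sum_Icc_sq (n : ℕ) :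
    3 * ∑ j ∈ Icc (-(n : ℤ)) n, j ^ 2 = n * (n + 1) * (2 * n + 1) := by
  rw [sum_Icc_neg_natCast_eq_sum_range]
  induction n with
  | zero => simp
  | succ n ih =>
    rw [sum_range_succ, mul_add, ih, sum_pair (by omega)]
    push_cast
    ring

theorem sum_term (n : ℕ) : ∑ j ∈ Icc (-(n : ℤ)) n, term n j = 0 := by
  have hcard : ((Icc (-(n : ℤ)) n).card : ℤ) = 2 * n + 1 := by
    rw [Int.card_Icc_of_le _ _ (by omega)]
    ring
  simp only [term, sum_sub_distrib, ← mul_sum, three_mul_sum_Icc_sq, sum_const, nsmul_eq_mul,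
    hcard]
  ring

theorem sum_block_one (n : ℕ) : ∑ r ∈ range (n + 1), block n 1 r = 0 := by
  rw [← sum_term_pow_eq_sum_block odd_one]
  simpa using sum_term n

theorem mul_block_one_le_block (S : ℤ) (k r : ℕ) :
    (k + 1) * (term S r)⁻ ^ k * block S 1 r ≤ block S (k + 1) r := by
  rw [block, mul_sum]
  refine sum_le_sum fun j hj => ?_
  have hneg : (term S j)⁻ = (term S r)⁻ := by
    rcases mem_insert.1 hj with rfl | hj
    · rfl
    · rw [mem_singleton.1 hj, term_neg]
  rw [hneg, pow_one, pow_one]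
  exact mul_pow_mul_sub_le_pow_sub_pow (negPart_nonneg _) (posPart_nonneg _) k

theorem antitone_negPart_term_pow (S : ℤ) (k : ℕ) :
    Antitone fun r : ℕ => (term S r)⁻ ^ k := by
  intro r r' h
  have hterm : term S r ≤ term S r' := by
    have : (r : ℤ) ^ 2 ≤ (r' : ℤ) ^ 2 := by gcongr
    unfold term
    linarith
  exact pow_le_pow_left₀ (negPart_nonneg _) (negPart_anti hterm) k

theorem block_one_zero (S : ℤ) : block S 1 0 = (term S S)⁺ - (term S 0)⁻ := by
  simp [block, partner]

theorem block_one_of_pos (S : ℤ) {r : ℕ} (hr : 0 < r) :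
    block S 1 r = (term S (S + 1 - r))⁺ + (term S (S - r))⁺ - 2 * (term S r)⁻ := by
  have hpos : partner S r = S - r := if_pos (by positivity)
  have hneg : term S (partner S (-r)) = term S (S + 1 - r) := by
    rw [partner, if_neg (by omega), ← term_neg]
    ring_nf
  rw [block, sum_pair (by omega), hpos, hneg, term_neg]
  ring

theorem block_one_zero_nonneg {S : ℤ} (hS : 2 ≤ S) : 0 ≤ block S 1 0 := by
  rw [block_one_zero, posPart_eq_self.2 (by unfold term; nlinarith),
    negPart_eq_neg.2 (by unfold term; nlinarith)]
  unfold term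
  nlinarith

section Bracket

variable {S t : ℤ}

theorem bracket_bounds (hS : 2 ≤ S) (ht₀ : 0 ≤ t) (ht : 3 * t ^ 2 ≤ S * (S + 1))
    (ht' : S * (S + 1) < 3 * (t + 1) ^ 2) : 1 ≤ t ∧ t + 1 ≤ S ∧ S ≤ 2 * t := by
  refine ⟨by nlinarith, by nlinarith, ?_⟩
  by_contra! h
  nlinarith

theorem posPart_term_of_le {j : ℤ} (hj₀ : 0 ≤ j) (hj : j ≤ t)
    (ht : 3 * t ^ 2 ≤ S * (S + 1)) : (term S j)⁺ = 0 :=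
  posPart_eq_zero.2 (by unfold term; nlinarith)

theorem posPart_term_of_lt {j : ℤ} (ht₀ : 0 ≤ t) (hj : t < j)
    (ht' : S * (S + 1) < 3 * (t + 1) ^ 2) : (term S j)⁺ = term S j :=
  posPart_eq_self.2 (by unfold term; nlinarith)

theorem negPart_term_of_le {j : ℤ} (hj₀ : 0 ≤ j) (hj : j ≤ t)
    (ht : 3 * t ^ 2 ≤ S * (S + 1)) : (term S j)⁻ = -term S j :=
  negPart_eq_neg.2 (by unfold term; nlinarith)

theorem block_one_nonpos (hS : 2 ≤ S) (ht₀ : 0 ≤ t) (ht : 3 * t ^ 2 ≤ S * (S + 1))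
    (ht' : S * (S + 1) < 3 * (t + 1) ^ 2) {r : ℕ} (hr : S - t ≤ r) (hrS : r ≤ S) :
    block S 1 r ≤ 0 := by
  obtain ⟨ht₁, htS, hSt⟩ := bracket_bounds hS ht₀ ht ht'
  have hgap : (term S (S - r))⁺ = 0 := posPart_term_of_le (by omega) (by omega) ht
  have hedge : (term S (S + 1 - r))⁺ ≤ 2 * (term S r)⁻ := by
    rcases hr.lt_or_eq with hr | hr
    · rw [posPart_term_of_le (by omega) (by omega) ht]
      positivity
    · rw [posPart_term_of_lt ht₀ (by omega) ht', negPart_term_of_le (by omega) (by omega) ht]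
      unfold term
      rw [← hr]
      have hu₁ : 1 ≤ S - t := by omega
      have hut : S - t ≤ t := by omega
      nlinarith [mul_nonneg (sub_nonneg.2 ht₁) (sub_nonneg.2 hu₁),
        mul_nonneg (sub_nonneg.2 hu₁) (sub_nonneg.2 hut)]
  rw [block_one_of_pos S (by omega), hgap]
  linarith

theorem block_one_le_block_one (hS : 2 ≤ S) (ht₀ : 0 ≤ t) (ht : 3 * t ^ 2 ≤ S * (S + 1))
    (ht' : S * (S + 1) < 3 * (t + 1) ^ 2) {r r' : ℕ} (hr : 0 < r) (hrr' : r < r')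
    (hr' : r' < S - t) : block S 1 r' ≤ block S 1 r := by
  obtain ⟨ht₁, htS, hSt⟩ := bracket_bounds hS ht₀ ht ht'
  rw [block_one_of_pos S hr, block_one_of_pos S (hr.trans hrr'),
    posPart_term_of_lt ht₀ (by omega) ht', posPart_term_of_lt ht₀ (by omega) ht',
    posPart_term_of_lt ht₀ (by omega) ht', posPart_term_of_lt ht₀ (by omega) ht',
    negPart_term_of_le (by omega) (by omega) ht, negPart_term_of_le (by omega) (by omega) ht]
  unfold term
  nlinarith [mul_nonneg (show (0 : ℤ) ≤ r' - r by omega) (show (0 : ℤ) ≤ S - r - r' by omega)]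

end Bracket

theorem block_one_nonpos_of_neg {S : ℤ} (hS : 2 ≤ S) {r r' : ℕ} (hrr' : r < r')
    (hr' : r' ≤ S) (hneg : block S 1 r < 0) : block S 1 r' ≤ 0 := by
  obtain ⟨t, ht₀, ht, ht'⟩ :=
    Int.exists_mul_sq_le_lt three_pos (by nlinarith : 0 ≤ S * (S + 1))
  rcases le_or_gt (S - t) r' with h | h
  · exact block_one_nonpos hS ht₀ ht ht' h hr'
  · have hr : 0 < r :=
      Nat.pos_of_ne_zero fun hr => (hr ▸ block_one_zero_nonneg hS).not_gt hneg
    exact (block_one_le_block_one hS ht₀ ht ht' hr hrr' h).trans hneg.le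

end SpinSum

open SpinSum in
theorem spin_sum_nonneg_integer_general (m : ℕ) (S : ℤ) (hS : 2 ≤ S) :
    0 ≤ ∑ j ∈ Finset.Icc (-S) S, (3 * j^2 - S * (S + 1))^(2*m + 1) := by
  obtain ⟨n, rfl⟩ : ∃ n : ℕ, S = n := ⟨S.toNat, by omega⟩
  change 0 ≤ ∑ j ∈ Icc (-(n : ℤ)) n, term n j ^ (2 * m + 1)
  rw [sum_term_pow_eq_sum_block (odd_two_mul_add_one m)]
  calc (0 : ℤ) ≤ (2 * m + 1) * ∑ r ∈ range (n + 1), (term n r)⁻ ^ (2 * m) * block n 1 r :=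
        mul_nonneg (by positivity) <| sum_range_mul_nonneg_of_antitone_of_sign_change
          (antitone_negPart_term_pow n (2 * m)) (fun r => by positivity)
          (fun r r' hrr' hr' => block_one_nonpos_of_neg hS hrr' (by omega))
          (sum_block_one n).ge
    _ ≤ ∑ r ∈ range (n + 1), block n (2 * m + 1) r := by
        rw [mul_sum]
        refine sum_le_sum fun r _ => ?_
        simpa [mul_assoc] using mul_block_one_le_block (n : ℤ) (2 * m) r

/-- The inequality (3.6) for integer spin S ≥ 2. -/
theorem spin_sum_nonneg_integer (m : ℕ) (hm : 1 ≤ m) (S : ℤ) (hS : 2 ≤ S) :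
    0 ≤ ∑ j ∈ Finset.Icc (-S) S, (3 * j^2 - S * (S + 1))^(2*m + 1) :=
  spin_sum_nonneg_integer_general m S hS
end

section
/- Let x, y ∈ ℝ^n be sorted decreasingly with equal sums, such that x majorizes y (all partial sums of x dominate those of y). Let φ be a continuous convex function on an interval containing all entries of x and y. Then ∑_{j=1}^n φ(x_j) ≥ ∑_{j=1}^n φ(y_j). -/
/-!
Write `d j = x j - y j` and `c j` for the slope of `φ` between `y j` and `x j`. Since both
sequences are decreasing, convexity makes `c` decreasing (at indices with `x j = y j` the slope is
undefined, but any decreasing interpolation of the remaining slopes will do). Then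
`∑ (φ (x j) - φ (y j)) = ∑ c j * d j`, and Abel summation rewrites this as a combination of the
partial sums of `d`, nonnegative by majorization, with the nonnegative weights `c k - c (k + 1)`.
-/

open Finset

section Slope

variable {𝕜 : Type*} [Field 𝕜] [LinearOrder 𝕜] [IsStrictOrderedRing 𝕜] {s : Set 𝕜} {f : 𝕜 → 𝕜}

lemma ConvexOn.slope_le_slope_of_le_left (hf : ConvexOn 𝕜 s f) {a a' b : 𝕜} (ha : a ∈ s)
    (ha' : a' ∈ s) (hb : b ∈ s) (hab : a ≠ b) (ha'b : a' ≠ b) (haa' : a ≤ a') :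
    slope f a b ≤ slope f a' b := by
  rw [slope_comm f a, slope_comm f a']
  exact hf.slope_mono hb ⟨ha, hab⟩ ⟨ha', ha'b⟩ haa'

lemma ConvexOn.slope_le_slope (hf : ConvexOn 𝕜 s f) {a a' b b' : 𝕜} (ha : a ∈ s) (ha' : a' ∈ s)
    (hb : b ∈ s) (hb' : b' ∈ s) (hab : a ≠ b) (hab' : a' ≠ b') (haa' : a ≤ a')
    (hbb' : b ≤ b') : slope f a b ≤ slope f a' b' := by
  by_cases ha'b : a' = b
  · have hab' : a ≠ b' := by rintro rfl; exact hab (le_antisymm (ha'b ▸ haa') hbb')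
    calc slope f a b ≤ slope f a b' := hf.slope_mono ha ⟨hb, hab.symm⟩ ⟨hb', hab'.symm⟩ hbb'
      _ ≤ slope f a' b' := hf.slope_le_slope_of_le_left ha ha' hb' hab' ‹_› haa'
  · calc slope f a b ≤ slope f a' b := hf.slope_le_slope_of_le_left ha ha' hb hab ha'b haa'
      _ ≤ slope f a' b' := hf.slope_mono ha' ⟨hb, Ne.symm ha'b⟩ ⟨hb', hab'.symm⟩ hbb'

end Slope

lemma mul_sum_le_sum_mul_of_antitone {c d : ℕ → ℝ} (hc : Antitone c) {n : ℕ}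
    (hd : ∀ k ≤ n, 0 ≤ ∑ j ∈ Icc 1 k, d j) :
    c n * ∑ j ∈ Icc 1 n, d j ≤ ∑ j ∈ Icc 1 n, c j * d j := by
  induction n with
  | zero => simp
  | succ n ih =>
    have hcn : c (n + 1) * ∑ j ∈ Icc 1 n, d j ≤ c n * ∑ j ∈ Icc 1 n, d j :=
      mul_le_mul_of_nonneg_right (hc n.le_succ) (hd n n.le_succ)
    rw [sum_Icc_succ_top (by omega), sum_Icc_succ_top (by omega), mul_add]
    linarith [ih fun k hk => hd k (hk.trans n.le_succ)]

theorem karamata_general (n : ℕ) (x y : ℕ → ℝ)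
    (hxdec : ∀ j k, 1 ≤ j → j ≤ k → k ≤ n → x k ≤ x j)
    (hydec : ∀ j k, 1 ≤ j → j ≤ k → k ≤ n → y k ≤ y j)
    (hsum : ∑ j ∈ Finset.Icc 1 n, x j = ∑ j ∈ Finset.Icc 1 n, y j)
    (hmaj : ∀ k, 1 ≤ k → k ≤ n →
      ∑ j ∈ Finset.Icc 1 k, y j ≤ ∑ j ∈ Finset.Icc 1 k, x j)
    (a b : ℝ) (φ : ℝ → ℝ)
    (hφconv : ConvexOn ℝ (Set.Icc a b) φ)
    (hxmem : ∀ j, 1 ≤ j → j ≤ n → x j ∈ Set.Icc a b)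
    (hymem : ∀ j, 1 ≤ j → j ≤ n → y j ∈ Set.Icc a b) :
    ∑ j ∈ Finset.Icc 1 n, φ (y j) ≤ ∑ j ∈ Finset.Icc 1 n, φ (x j) := by
  set U : Finset ℕ := {j ∈ Icc 1 n | x j ≠ y j}
  have hU : ∀ {j}, j ∈ U ↔ (1 ≤ j ∧ j ≤ n) ∧ x j ≠ y j := by simp [U]
  have hslope : AntitoneOn (fun j => slope φ (y j) (x j)) U := by
    intro j hj k hk hjk
    obtain ⟨⟨hj1, hjn⟩, hxyj⟩ := hU.1 hj
    obtain ⟨⟨hk1, hkn⟩, hxyk⟩ := hU.1 hk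
    exact hφconv.slope_le_slope (hymem k hk1 hkn) (hymem j hj1 hjn) (hxmem k hk1 hkn)
      (hxmem j hj1 hjn) hxyk.symm hxyj.symm (hydec j k hj1 hjk hkn) (hxdec j k hj1 hjk hkn)
  obtain ⟨c, hc, hcU⟩ := hslope.exists_antitone_extension
    (U.finite_toSet.image _).bddBelow (U.finite_toSet.image _).bddAbove
  have hterm : ∀ j ∈ Icc 1 n, φ (x j) - φ (y j) = c j * (x j - y j) := by
    intro j hj
    by_cases hxy : x j = y j
    · simp [hxy]
    · rw [← hcU (hU.2 ⟨mem_Icc.1 hj, hxy⟩), mul_comm, ← smul_eq_mul, sub_smul_slope, vsub_eq_sub]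
  have hpartial : ∀ k ≤ n, 0 ≤ ∑ j ∈ Icc 1 k, (x j - y j) := by
    intro k hk
    rcases Nat.eq_zero_or_pos k with rfl | hk1
    · simp
    · rw [sum_sub_distrib, sub_nonneg]
      exact hmaj k hk1 hk
  have hmain := mul_sum_le_sum_mul_of_antitone hc hpartial
  rw [sum_sub_distrib, hsum, sub_self, mul_zero, ← sum_congr rfl hterm, sum_sub_distrib,
    sub_nonneg] at hmain
  exact hmain

/-- Karamata's inequality for decreasingly sorted vectors with equal sums. -/
theorem karamata (n : ℕ) (x y : ℕ → ℝ)
    (hxdec : ∀ j k, 1 ≤ j → j ≤ k → k ≤ n → x k ≤ x j)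
    (hydec : ∀ j k, 1 ≤ j → j ≤ k → k ≤ n → y k ≤ y j)
    (hsum : ∑ j ∈ Finset.Icc 1 n, x j = ∑ j ∈ Finset.Icc 1 n, y j)
    (hmaj : ∀ k, 1 ≤ k → k ≤ n →
      ∑ j ∈ Finset.Icc 1 k, y j ≤ ∑ j ∈ Finset.Icc 1 k, x j)
    (a b : ℝ) (φ : ℝ → ℝ)
    (hφconv : ConvexOn ℝ (Set.Icc a b) φ)
    (hφcont : ContinuousOn φ (Set.Icc a b))
    (hxmem : ∀ j, 1 ≤ j → j ≤ n → x j ∈ Set.Icc a b)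
    (hymem : ∀ j, 1 ≤ j → j ≤ n → y j ∈ Set.Icc a b) :
    ∑ j ∈ Finset.Icc 1 n, φ (y j) ≤ ∑ j ∈ Finset.Icc 1 n, φ (x j) :=
  karamata_general n x y hxdec hydec hsum hmaj a b φ hφconv hxmem hymem
end
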